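/- arXiv:2505.04514 — 3 statements merged into one kernel-verified Lean document; each statement's English description precedes it below -/
import Mathlib

section
/- For every temperature T > 0 and every constraint vector q ∈ ℝ^c for which the feasible set {ρ ∈ D_d : Tr[Q_i ρ] = q_i for all i ∈ [c]} is nonempty, the minimum free energy equals the supremum of the dual chemical potential objective: F_T(Q,q) = sup_{μ ∈ ℝ^c} ( μ·q − T ln Z_T(μ) ). -/
open Matrix MeasureTheory
open scoped ComplexOrder

noncomputable section

/-- A density matrix: a positive semi-definite complex matrix with unit trace. -/
def IsDensityMatrix {n : Type*} [Fintype n] (ρ : Matrix n n ℂ) : Prop :=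
  ρ.PosSemidef ∧ ρ.trace = 1

/-- von Neumann entropy `S(ρ) = -Tr[ρ ln ρ]` via eigenvalues,
with the convention `0 ln 0 = 0` (since `Real.log 0 = 0`). -/
noncomputable def vnEntropy {n : Type*} [Fintype n] [DecidableEq n]
    (ρ : Matrix n n ℂ) : ℝ :=
  if h : ρ.IsHermitian then -∑ i, h.eigenvalues i * Real.log (h.eigenvalues i) else 0

/-- Matrix logarithm via the functional calculus (junk value `0` off Hermitian matrices),
with the convention `log 0 = 0` on eigenvalues. -/
noncomputable def matLog {n : Type*} [Fintype n] [DecidableEq n]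
    (A : Matrix n n ℂ) : Matrix n n ℂ :=
  if h : A.IsHermitian then
    (h.eigenvectorUnitary : Matrix n n ℂ) *
      Matrix.diagonal (fun i => (Real.log (h.eigenvalues i) : ℂ)) *
      star (h.eigenvectorUnitary : Matrix n n ℂ)
  else 0

/-- Real matrix power via the functional calculus (junk value `0` off Hermitian matrices). -/
noncomputable def matRpow {n : Type*} [Fintype n] [DecidableEq n]
    (A : Matrix n n ℂ) (s : ℝ) : Matrix n n ℂ :=
  if h : A.IsHermitian then
    (h.eigenvectorUnitary : Matrix n n ℂ) *
      Matrix.diagonal (fun i => ((h.eigenvalues i ^ s : ℝ) : ℂ)) *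
      star (h.eigenvectorUnitary : Matrix n n ℂ)
  else 0

/-- Operator (spectral) norm of a complex square matrix. -/
noncomputable def opNorm {n : Type*} [Fintype n] [DecidableEq n] (A : Matrix n n ℂ) : ℝ :=
  ‖Matrix.toEuclideanCLM (𝕜 := ℂ) A‖

/-- `μ · Q := ∑ i, μ i • Q i`. -/
def muDotQ {d c : ℕ} (Q : Fin c → Matrix (Fin d) (Fin d) ℂ) (μ : Fin c → ℝ) :
    Matrix (Fin d) (Fin d) ℂ :=
  ∑ i, (μ i : ℂ) • Q i

/-- Partition function `Z_T(μ) = Tr[exp(-(H - μ·Q)/T)]`. -/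
noncomputable def partitionZ {d c : ℕ} (H : Matrix (Fin d) (Fin d) ℂ)
    (Q : Fin c → Matrix (Fin d) (Fin d) ℂ) (T : ℝ) (μ : Fin c → ℝ) : ℝ :=
  (Matrix.trace (NormedSpace.exp ((-(T⁻¹) : ℂ) • (H - muDotQ Q μ)))).re

/-- Thermal state `ρ_T(μ) = exp(-(H - μ·Q)/T) / Z_T(μ)`. -/
noncomputable def thermalState {d c : ℕ} (H : Matrix (Fin d) (Fin d) ℂ)
    (Q : Fin c → Matrix (Fin d) (Fin d) ℂ) (T : ℝ) (μ : Fin c → ℝ) :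
    Matrix (Fin d) (Fin d) ℂ :=
  ((partitionZ H Q T μ : ℂ))⁻¹ • NormedSpace.exp ((-(T⁻¹) : ℂ) • (H - muDotQ Q μ))

/-- Umegaki relative entropy `D(ω‖τ) = Tr[ω (ln ω − ln τ)]`. -/
noncomputable def relEntropy {n : Type*} [Fintype n] [DecidableEq n]
    (ω τ : Matrix n n ℂ) : ℝ :=
  (Matrix.trace (ω * (matLog ω - matLog τ))).re

end

/-!
Weak duality is the Gibbs variational principle: for Hermitian `A` and every density matrix `ρ`,
`Tr[Aρ] - T S(ρ) ≥ -T ln Tr[exp(-A/T)]`, with equality at the Gibbs state; for `A = H - μ·Q`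
and feasible `ρ` this reads `μ·q - T ln Z_T(μ) ≤ Tr[Hρ] - T S(ρ)`. All entropy estimates come from
one majorization fact (Klein's trick): if `ρ = V diag(p) V⋆`, the diagonal of `ρ` in the basis
given by the columns of a unitary `W` is `p` multiplied by the doubly stochastic matrix
`|(V⋆W)ᵢⱼ|²`, so by convexity of `x ln x` it has at least the entropy of `ρ`.

For strong duality consider the set `K ⊆ ℝ^c × ℝ` of pairs `(Tr[Qρ], s)` with
`s ≥ Tr[Hρ] - T S(ρ)`. It is convex because `S` is concave, and closed because density matrices
form a compact set on which `-S` is lower semicontinuous (a supremum of continuous functions of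
the diagonal in a fixed basis). If `y < F_T(Q, q)` then `(q, y) ∉ K` while `(q, s) ∈ K` for some
`s > y`, so a hyperplane separating `(q, y)` from `K` is not vertical: `s - ν·(t - q) > y` on `K`.
Evaluating at the Gibbs state of `H - ν·Q` gives `y < ν·q - T ln Z_T(ν)`.
-/

open Real

section ProbabilityVector

variable {ι : Type*} [Fintype ι]

theorem nonempty_of_mem_stdSimplex {w : ι → ℝ} (hw : w ∈ stdSimplex ℝ ι) : Nonempty ι :=
  not_isEmpty_iff.mp fun _ => by simp [stdSimplex_of_isEmpty_index] at hw

theorem sum_mul_log_le_sum_mul_log {p r : ι → ℝ} (hp : p ∈ stdSimplex ℝ ι)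
    (hr : ∀ i, 0 ≤ r i) (hr1 : ∑ i, r i ≤ 1) (hpr : ∀ i, r i = 0 → p i = 0) :
    ∑ i, p i * log (r i) ≤ ∑ i, p i * log (p i) := by
  have key : ∀ i, p i * log (r i) ≤ p i * log (p i) + (r i - p i) := by
    intro i
    rcases (hp.1 i).eq_or_lt with hpi | hpi
    · simp [← hpi, hr i]
    have hri : 0 < r i := (hr i).lt_of_ne fun h => hpi.ne' (hpr i h.symm)
    have := mul_le_mul_of_nonneg_left (log_le_sub_one_of_pos (div_pos hri hpi)) hpi.le
    rw [log_div hri.ne' hpi.ne', mul_sub, mul_sub, mul_div_cancel₀ _ hpi.ne'] at this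
    linarith
  calc ∑ i, p i * log (r i) ≤ ∑ i, (p i * log (p i) + (r i - p i)) :=
        Finset.sum_le_sum fun i _ => key i
    _ = ∑ i, p i * log (p i) + (∑ i, r i - ∑ i, p i) := by
      rw [Finset.sum_add_distrib, Finset.sum_sub_distrib]
    _ ≤ ∑ i, p i * log (p i) := by linarith [hp.2]

theorem sum_mul_log_vecMul_le [DecidableEq ι] {C : Matrix ι ι ℝ} (hC : C ∈ doublyStochastic ℝ ι)
    {p : ι → ℝ} (hp : ∀ i, 0 ≤ p i) :
    ∑ j, (p ᵥ* C) j * log ((p ᵥ* C) j) ≤ ∑ i, p i * log (p i) := by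
  have jensen : ∀ j, (p ᵥ* C) j * log ((p ᵥ* C) j) ≤ ∑ i, C i j * (p i * log (p i)) := by
    intro j
    have := convexOn_mul_log.map_sum_le (t := Finset.univ) (w := fun i => C i j) (p := p)
      (fun i _ => nonneg_of_mem_doublyStochastic hC) (sum_col_of_mem_doublyStochastic hC j)
      (fun i _ => Set.mem_Ici.2 (hp i))
    simpa [Matrix.vecMul, dotProduct, mul_comm] using this
  calc ∑ j, (p ᵥ* C) j * log ((p ᵥ* C) j) ≤ ∑ j, ∑ i, C i j * (p i * log (p i)) :=
        Finset.sum_le_sum fun j _ => jensen j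
    _ = ∑ i, p i * log (p i) := by
      rw [Finset.sum_comm]
      simp [← Finset.sum_mul, sum_row_of_mem_doublyStochastic hC]

theorem exists_pos_mem_stdSimplex_sub_le_sum_mul_log {p : ι → ℝ} (hp : p ∈ stdSimplex ℝ ι)
    {ε : ℝ} (hε : 0 < ε) :
    ∃ g ∈ stdSimplex ℝ ι, (∀ j, 0 < g j) ∧
      ∑ j, p j * log (p j) - ε ≤ ∑ j, p j * log (g j) := by
  have := nonempty_of_mem_stdSimplex hp
  set t := exp (-ε)
  have ht : t < 1 := exp_lt_one_iff.2 (neg_neg_of_pos hε)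
  have hN : (0 : ℝ) < Fintype.card ι := by exact_mod_cast Fintype.card_pos
  -- mixing in the uniform distribution makes `g` positive at the price `log t = -ε`
  set g : ι → ℝ := fun j => t * p j + (1 - t) / Fintype.card ι
  have hg : ∀ j, t * p j < g j := fun j => lt_add_of_pos_right _ (div_pos (by linarith) hN)
  have hgpos : ∀ j, 0 < g j := fun j => (mul_nonneg (exp_pos _).le (hp.1 j)).trans_lt (hg j)
  have hgsum : ∑ j, g j = 1 := by
    simp only [g, Finset.sum_add_distrib, ← Finset.mul_sum, hp.2, Finset.sum_const,
      Finset.card_univ, nsmul_eq_mul]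
    field_simp
    ring
  refine ⟨g, ⟨fun j => (hgpos j).le, hgsum⟩, hgpos, ?_⟩
  have key : ∀ j, p j * log (p j) - ε * p j ≤ p j * log (g j) := fun j => by
    rcases (hp.1 j).eq_or_lt with hpj | hpj
    · simp [← hpj]
    have := log_le_log (mul_pos (exp_pos _) hpj) (hg j).le
    rw [log_mul (exp_pos _).ne' hpj.ne', log_exp] at this
    nlinarith
  have hsum := Finset.sum_le_sum fun j (_ : j ∈ Finset.univ) => key j
  rwa [Finset.sum_sub_distrib, ← Finset.mul_sum, hp.2, mul_one] at hsum

noncomputable def gibbsDistribution (T : ℝ) (a : ι → ℝ) (j : ι) : ℝ :=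
  exp (-a j / T) / ∑ k, exp (-a k / T)

theorem gibbsDistribution_pos (T : ℝ) (a : ι → ℝ) (j : ι) : 0 < gibbsDistribution T a j :=
  div_pos (exp_pos _) (Finset.sum_pos (fun _ _ => exp_pos _) ⟨j, Finset.mem_univ j⟩)

theorem gibbsDistribution_mem_stdSimplex [Nonempty ι] (T : ℝ) (a : ι → ℝ) :
    gibbsDistribution T a ∈ stdSimplex ℝ ι := by
  refine ⟨fun j => (gibbsDistribution_pos T a j).le, ?_⟩
  have hZ : 0 < ∑ k, exp (-a k / T) := Finset.sum_pos (fun k _ => exp_pos _) Finset.univ_nonempty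
  simp only [gibbsDistribution, ← Finset.sum_div, div_self hZ.ne']

theorem mul_sum_mul_log_gibbsDistribution {w : ι → ℝ} (hw : w ∈ stdSimplex ℝ ι) {T : ℝ}
    (hT : T ≠ 0) (a : ι → ℝ) :
    T * ∑ j, w j * log (gibbsDistribution T a j)
      = -∑ j, a j * w j - T * log (∑ k, exp (-a k / T)) := by
  have := nonempty_of_mem_stdSimplex hw
  have hZ : 0 < ∑ k, exp (-a k / T) := Finset.sum_pos (fun k _ => exp_pos _) Finset.univ_nonempty
  simp only [gibbsDistribution, log_div (exp_pos _).ne' hZ.ne', log_exp, mul_sub,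
    Finset.sum_sub_distrib, ← Finset.sum_mul, hw.2, Finset.mul_sum]
  have : ∀ i, T * (w i * (-a i / T)) = -(a i * w i) := fun i => by field_simp
  simp [this, Finset.sum_neg_distrib]

theorem neg_mul_log_sum_exp_le {w : ι → ℝ} (hw : w ∈ stdSimplex ℝ ι) {T : ℝ} (hT : 0 < T)
    (a : ι → ℝ) :
    -(T * log (∑ k, exp (-a k / T))) ≤ ∑ j, a j * w j + T * ∑ j, w j * log (w j) := by
  have := nonempty_of_mem_stdSimplex hw
  have hg := gibbsDistribution_mem_stdSimplex T a
  have := mul_le_mul_of_nonneg_left (sum_mul_log_le_sum_mul_log hw hg.1 hg.2.le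
    fun j h => absurd h (gibbsDistribution_pos T a j).ne') hT.le
  rw [mul_sum_mul_log_gibbsDistribution hw hT.ne'] at this
  linarith

theorem sum_mul_gibbsDistribution_add_mul_sum_mul_log [Nonempty ι] {T : ℝ} (hT : T ≠ 0)
    (a : ι → ℝ) :
    ∑ j, a j * gibbsDistribution T a j
        + T * ∑ j, gibbsDistribution T a j * log (gibbsDistribution T a j)
      = -(T * log (∑ k, exp (-a k / T))) := by
  rw [mul_sum_mul_log_gibbsDistribution (gibbsDistribution_mem_stdSimplex T a) hT]
  ring

end ProbabilityVector

section Unitary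

variable {n : Type*} [Fintype n] [DecidableEq n]

theorem normSq_mem_doublyStochastic {U : Matrix n n ℂ} (hU : U ∈ unitaryGroup n ℂ) :
    of (fun i j => Complex.normSq (U i j)) ∈ doublyStochastic ℝ n := by
  have row : ∀ i, ∑ j, Complex.normSq (U i j) = 1 := fun i => by
    have := congrArg (fun M => (M i i).re) (Unitary.mul_star_self_of_mem hU)
    simpa [Matrix.mul_apply, Complex.mul_conj] using this
  have col : ∀ j, ∑ i, Complex.normSq (U i j) = 1 := fun j => by
    have := congrArg (fun M => (M j j).re) (Unitary.star_mul_self_of_mem hU)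
    simpa [Matrix.mul_apply, Complex.conj_mul', Complex.normSq_eq_norm_sq, ← Complex.ofReal_pow]
      using this
  exact mem_doublyStochastic_iff_sum.2 ⟨fun i j => Complex.normSq_nonneg _, row, col⟩

theorem isCompact_unitaryGroup : IsCompact (unitaryGroup n ℂ : Set (Matrix n n ℂ)) :=
  (isCompact_univ_pi fun _ => isCompact_univ_pi fun _ => isCompact_closedBall (0 : ℂ) 1)
    |>.of_isClosed_subset (isClosed_unitary (R := Matrix n n ℂ)) fun U hU i _ j _ => by
      simpa using entry_norm_bound_of_unitary hU i j

theorem trace_mul_mul_star_of_mem_unitaryGroup {U : Matrix n n ℂ} (hU : U ∈ unitaryGroup n ℂ)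
    (D : Matrix n n ℂ) : (U * D * star U).trace = D.trace := by
  rw [trace_mul_cycle, Unitary.star_mul_self_of_mem hU, Matrix.one_mul]

end Unitary

namespace Matrix.IsHermitian

variable {n : Type*} [Fintype n] [DecidableEq n] {A : Matrix n n ℂ} (hA : A.IsHermitian)

theorem eq_mul_diagonal_mul_star :
    A = (hA.eigenvectorUnitary : Matrix n n ℂ) * diagonal (fun i => (hA.eigenvalues i : ℂ))
      * star (hA.eigenvectorUnitary : Matrix n n ℂ) := by
  conv_lhs => rw [hA.spectral_theorem, Unitary.conjStarAlgAut_apply]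
  rfl

theorem star_mul_mul_eq_diagonal :
    star (hA.eigenvectorUnitary : Matrix n n ℂ) * A * (hA.eigenvectorUnitary : Matrix n n ℂ)
      = diagonal (fun i => (hA.eigenvalues i : ℂ)) := by
  have := hA.conjStarAlgAut_star_eigenvectorUnitary
  rwa [Unitary.conjStarAlgAut_star_apply] at this

theorem vnEntropy_eq : vnEntropy A = -∑ i, hA.eigenvalues i * log (hA.eigenvalues i) := by
  rw [vnEntropy, dif_pos hA]

theorem exp_smul (t : ℝ) :
    NormedSpace.exp ((t : ℂ) • A)
      = (hA.eigenvectorUnitary : Matrix n n ℂ)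
        * diagonal (fun i => (Real.exp (t * hA.eigenvalues i) : ℂ))
        * star (hA.eigenvectorUnitary : Matrix n n ℂ) := by
  set U : Matrix n n ℂ := ↑hA.eigenvectorUnitary
  have hinv : U⁻¹ = star U :=
    inv_eq_left_inv (Unitary.star_mul_self_of_mem hA.eigenvectorUnitary.2)
  have hU : IsUnit U := (Unitary.toUnits hA.eigenvectorUnitary).isUnit
  have hdiag : (t : ℂ) • diagonal (fun i => (hA.eigenvalues i : ℂ))
      = diagonal (fun i => ((t * hA.eigenvalues i : ℝ) : ℂ)) := by
    rw [← diagonal_smul]; congr 1; ext i; simp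
  have hconj : (t : ℂ) • A = U * diagonal (fun i => ((t * hA.eigenvalues i : ℝ) : ℂ)) * U⁻¹ := by
    conv_lhs => rw [hA.eq_mul_diagonal_mul_star]
    rw [hinv, ← hdiag]
    simp only [Matrix.mul_smul, Matrix.smul_mul]
    rfl
  rw [hconj, Matrix.exp_conj _ _ hU, Matrix.exp_diagonal, hinv]
  congr 3
  ext i
  rw [Pi.exp_def, ← Complex.exp_eq_exp_ℂ, Complex.ofReal_exp]

theorem re_trace_exp_neg_inv_smul (T : ℝ) :
    (NormedSpace.exp ((-(T⁻¹) : ℂ) • A)).trace.re = ∑ i, Real.exp (-hA.eigenvalues i / T) := by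
  have hT : (-(T⁻¹) : ℂ) = ((-T⁻¹ : ℝ) : ℂ) := by push_cast; rfl
  have hexp : ∀ i, -T⁻¹ * hA.eigenvalues i = -hA.eigenvalues i / T := fun i => by ring
  rw [hT, hA.exp_smul, trace_mul_mul_star_of_mem_unitaryGroup hA.eigenvectorUnitary.2,
    trace_diagonal, Complex.re_sum]
  simp only [Complex.ofReal_re, hexp]

end Matrix.IsHermitian

theorem Matrix.IsHermitian.ofReal_re_trace_mul {n : Type*} [Fintype n] {A B : Matrix n n ℂ}
    (hA : A.IsHermitian) (hB : B.IsHermitian) : (((A * B).trace.re : ℝ) : ℂ) = (A * B).trace := by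
  refine Complex.conj_eq_iff_re.1 ?_
  rw [← Complex.star_def, ← trace_conjTranspose, conjTranspose_mul, hA.eq, hB.eq, trace_mul_comm]

section DensityMatrix

variable {n : Type*} [Fintype n]

theorem IsDensityMatrix.isHermitian {ρ : Matrix n n ℂ} (hρ : IsDensityMatrix ρ) : ρ.IsHermitian :=
  hρ.1.1

theorem convex_setOf_isDensityMatrix : Convex ℝ {ρ : Matrix n n ℂ | IsDensityMatrix ρ} := by
  intro ρ₁ h₁ ρ₂ h₂ a b ha hb hab
  refine ⟨(h₁.1.smul ha).add (h₂.1.smul hb), ?_⟩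
  rw [trace_add, trace_smul, trace_smul, h₁.2, h₂.2, ← add_smul, hab, one_smul]

variable [DecidableEq n]

theorem IsDensityMatrix.eigenvalues_mem_stdSimplex {ρ : Matrix n n ℂ} (hρ : IsDensityMatrix ρ) :
    hρ.isHermitian.eigenvalues ∈ stdSimplex ℝ n := by
  refine ⟨hρ.1.eigenvalues_nonneg, ?_⟩
  have := congrArg Complex.re hρ.2
  rwa [hρ.isHermitian.eq_mul_diagonal_mul_star,
    trace_mul_mul_star_of_mem_unitaryGroup hρ.isHermitian.eigenvectorUnitary.2, trace_diagonal,
    Complex.re_sum] at this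

theorem IsDensityMatrix.nonempty {ρ : Matrix n n ℂ} (hρ : IsDensityMatrix ρ) : Nonempty n :=
  nonempty_of_mem_stdSimplex hρ.eigenvalues_mem_stdSimplex

theorem isDensityMatrix_mul_diagonal_mul_star {U : Matrix n n ℂ} (hU : U ∈ unitaryGroup n ℂ)
    {p : n → ℝ} (hp : p ∈ stdSimplex ℝ n) :
    IsDensityMatrix (U * diagonal (fun i => (p i : ℂ)) * star U) := by
  refine ⟨?_, ?_⟩
  · rw [star_eq_conjTranspose]
    exact (posSemidef_diagonal_iff.2 fun i => by exact_mod_cast hp.1 i).mul_mul_conjTranspose_same U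
  · rw [trace_mul_mul_star_of_mem_unitaryGroup hU, trace_diagonal]
    exact_mod_cast hp.2

theorem isCompact_setOf_isDensityMatrix : IsCompact {ρ : Matrix n n ℂ | IsDensityMatrix ρ} := by
  have himage : {ρ : Matrix n n ℂ | IsDensityMatrix ρ}
      = (fun x : Matrix n n ℂ × (n → ℝ) => x.1 * diagonal (fun i => (x.2 i : ℂ)) * star x.1) ''
          ((unitaryGroup n ℂ : Set (Matrix n n ℂ)) ×ˢ stdSimplex ℝ n) := by
    ext ρ
    refine ⟨fun hρ => ⟨(_, _), ⟨hρ.isHermitian.eigenvectorUnitary.2, hρ.eigenvalues_mem_stdSimplex⟩,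
      hρ.isHermitian.eq_mul_diagonal_mul_star.symm⟩, ?_⟩
    rintro ⟨⟨U, p⟩, ⟨hU, hp⟩, rfl⟩
    exact isDensityMatrix_mul_diagonal_mul_star hU hp
  rw [himage]
  exact (isCompact_unitaryGroup.prod (isCompact_stdSimplex ℝ n)).image (by fun_prop)

end DensityMatrix

section DiagInBasis

variable {n : Type*} [Fintype n]

/-- The diagonal of `ρ` in the orthonormal basis formed by the columns of `W`. -/
def diagInBasis (W ρ : Matrix n n ℂ) (j : n) : ℝ := ((star W * ρ * W) j j).re

theorem continuous_diagInBasis (W : Matrix n n ℂ) (j : n) :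
    Continuous fun ρ : Matrix n n ℂ => diagInBasis W ρ j := by
  unfold diagInBasis
  fun_prop

theorem diagInBasis_add_smul (W ρ₁ ρ₂ : Matrix n n ℂ) (a b : ℝ) :
    diagInBasis W (a • ρ₁ + b • ρ₂) = a • diagInBasis W ρ₁ + b • diagInBasis W ρ₂ := by
  ext j
  simp [diagInBasis, Matrix.mul_add, Matrix.add_mul]

variable [DecidableEq n]

theorem diagInBasis_mul_diagonal_mul_star (V W : Matrix n n ℂ) (p : n → ℝ) :
    diagInBasis W (V * diagonal (fun i => (p i : ℂ)) * star V)
      = p ᵥ* of (fun i j => Complex.normSq ((star V * W) i j)) := by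
  have hconj : star W * (V * diagonal (fun i => (p i : ℂ)) * star V) * W
      = star (star V * W) * diagonal (fun i => (p i : ℂ)) * (star V * W) := by
    simp only [star_mul, star_star, Matrix.mul_assoc]
  ext j
  rw [diagInBasis, hconj]
  generalize star V * W = N
  simp only [Matrix.mul_apply, star_apply, diagonal_apply, mul_ite, mul_zero, Finset.sum_ite_eq',
    Finset.mem_univ, if_true, Complex.re_sum, vecMul, dotProduct, of_apply]
  refine Finset.sum_congr rfl fun i _ => ?_
  simp only [Complex.normSq_apply, Complex.mul_re, Complex.mul_im, Complex.star_def,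
    Complex.conj_re, Complex.conj_im, Complex.ofReal_re, Complex.ofReal_im]
  ring

theorem diagInBasis_mul_diagonal_mul_star_self {V : Matrix n n ℂ} (hV : V ∈ unitaryGroup n ℂ)
    (p : n → ℝ) : diagInBasis V (V * diagonal (fun i => (p i : ℂ)) * star V) = p := by
  have hVV := Unitary.star_mul_self_of_mem hV
  have : star V * (V * diagonal (fun i => (p i : ℂ)) * star V) * V
      = diagonal (fun i => (p i : ℂ)) := by
    simp only [← Matrix.mul_assoc, hVV, Matrix.one_mul]
    rw [Matrix.mul_assoc, hVV, Matrix.mul_one]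
  ext j
  simp [diagInBasis, this]

theorem Matrix.IsHermitian.diagInBasis_eigenvectorUnitary {A : Matrix n n ℂ}
    (hA : A.IsHermitian) :
    diagInBasis (hA.eigenvectorUnitary : Matrix n n ℂ) A = hA.eigenvalues := by
  ext j
  simp [diagInBasis, hA.star_mul_mul_eq_diagonal]

theorem Matrix.IsHermitian.re_trace_mul {A : Matrix n n ℂ} (hA : A.IsHermitian)
    (ρ : Matrix n n ℂ) :
    (A * ρ).trace.re
      = ∑ j, hA.eigenvalues j * diagInBasis (hA.eigenvectorUnitary : Matrix n n ℂ) ρ j := by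
  set U : Matrix n n ℂ := ↑hA.eigenvectorUnitary
  have : (A * ρ).trace = (diagonal (fun i => (hA.eigenvalues i : ℂ)) * (star U * ρ * U)).trace := by
    conv_lhs => rw [hA.eq_mul_diagonal_mul_star]
    rw [Matrix.mul_assoc, Matrix.mul_assoc, trace_mul_comm]
    simp only [Matrix.mul_assoc]
    rfl
  rw [this]
  simp [Matrix.trace, diagInBasis, Complex.re_sum]

theorem IsDensityMatrix.diagInBasis_mem_stdSimplex {ρ W : Matrix n n ℂ} (hρ : IsDensityMatrix ρ)
    (hW : W ∈ unitaryGroup n ℂ) : diagInBasis W ρ ∈ stdSimplex ℝ n := by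
  refine ⟨fun j => ?_, ?_⟩
  · exact (Complex.le_def.1 ((hρ.1.conjTranspose_mul_mul_same W).diag_nonneg (i := j))).1
  · have := congrArg Complex.re hρ.2
    rwa [← trace_mul_mul_star_of_mem_unitaryGroup (Unitary.star_mem hW), star_star, Matrix.trace,
      Complex.re_sum] at this

end DiagInBasis

section Entropy

variable {n : Type*} [Fintype n] [DecidableEq n]

theorem sum_mul_log_diagInBasis_le {V W : Matrix n n ℂ} (hV : V ∈ unitaryGroup n ℂ)
    (hW : W ∈ unitaryGroup n ℂ) {p : n → ℝ} (hp : ∀ i, 0 ≤ p i) :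
    ∑ j, diagInBasis W (V * diagonal (fun i => (p i : ℂ)) * star V) j
        * log (diagInBasis W (V * diagonal (fun i => (p i : ℂ)) * star V) j)
      ≤ ∑ i, p i * log (p i) := by
  rw [diagInBasis_mul_diagonal_mul_star]
  exact sum_mul_log_vecMul_le (normSq_mem_doublyStochastic (mul_mem (Unitary.star_mem hV) hW)) hp

theorem IsDensityMatrix.sum_mul_log_diagInBasis_le_neg_vnEntropy {ρ W : Matrix n n ℂ}
    (hρ : IsDensityMatrix ρ) (hW : W ∈ unitaryGroup n ℂ) :
    ∑ j, diagInBasis W ρ j * log (diagInBasis W ρ j) ≤ -vnEntropy ρ := by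
  rw [hρ.isHermitian.vnEntropy_eq, neg_neg]
  have := sum_mul_log_diagInBasis_le hρ.isHermitian.eigenvectorUnitary.2 hW
    hρ.eigenvalues_mem_stdSimplex.1
  rwa [← hρ.isHermitian.eq_mul_diagonal_mul_star] at this

theorem vnEntropy_mul_diagonal_mul_star {V : Matrix n n ℂ} (hV : V ∈ unitaryGroup n ℂ)
    {p : n → ℝ} (hp : p ∈ stdSimplex ℝ n) :
    vnEntropy (V * diagonal (fun i => (p i : ℂ)) * star V) = -∑ i, p i * log (p i) := by
  have hρ := isDensityMatrix_mul_diagonal_mul_star hV hp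
  have hle := hρ.sum_mul_log_diagInBasis_le_neg_vnEntropy hV
  rw [diagInBasis_mul_diagonal_mul_star_self hV] at hle
  have hge := sum_mul_log_diagInBasis_le hV hρ.isHermitian.eigenvectorUnitary.2 hp.1
  rw [hρ.isHermitian.diagInBasis_eigenvectorUnitary, ← neg_le_neg_iff,
    ← hρ.isHermitian.vnEntropy_eq] at hge
  linarith

theorem concaveOn_vnEntropy : ConcaveOn ℝ {ρ : Matrix n n ℂ | IsDensityMatrix ρ} vnEntropy := by
  refine ⟨convex_setOf_isDensityMatrix, fun ρ₁ h₁ ρ₂ h₂ a b ha hb hab => ?_⟩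
  have hσ := convex_setOf_isDensityMatrix h₁ h₂ ha hb hab
  set U : Matrix n n ℂ := ↑hσ.isHermitian.eigenvectorUnitary
  have hU := hσ.isHermitian.eigenvectorUnitary.2
  have hw₁ := h₁.diagInBasis_mem_stdSimplex hU
  have hw₂ := h₂.diagInBasis_mem_stdSimplex hU
  have hmix : hσ.isHermitian.eigenvalues = a • diagInBasis U ρ₁ + b • diagInBasis U ρ₂ := by
    rw [← diagInBasis_add_smul, ← hσ.isHermitian.diagInBasis_eigenvectorUnitary]
  have hconvex : ∀ j, hσ.isHermitian.eigenvalues j * log (hσ.isHermitian.eigenvalues j)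
      ≤ a * (diagInBasis U ρ₁ j * log (diagInBasis U ρ₁ j))
        + b * (diagInBasis U ρ₂ j * log (diagInBasis U ρ₂ j)) := fun j => by
    rw [hmix]
    exact convexOn_mul_log.2 (Set.mem_Ici.2 (hw₁.1 j)) (Set.mem_Ici.2 (hw₂.1 j)) ha hb hab
  have hsum := Finset.sum_le_sum fun j (_ : j ∈ Finset.univ) => hconvex j
  rw [Finset.sum_add_distrib, ← Finset.mul_sum, ← Finset.mul_sum] at hsum
  have k₁ := h₁.sum_mul_log_diagInBasis_le_neg_vnEntropy hU
  have k₂ := h₂.sum_mul_log_diagInBasis_le_neg_vnEntropy hU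
  rw [hσ.isHermitian.vnEntropy_eq, smul_eq_mul, smul_eq_mul]
  nlinarith [mul_le_mul_of_nonneg_left k₁ ha, mul_le_mul_of_nonneg_left k₂ hb]

theorem IsDensityMatrix.exists_continuous_le_neg_vnEntropy {σ : Matrix n n ℂ}
    (hσ : IsDensityMatrix σ) {ε : ℝ} (hε : 0 < ε) :
    ∃ G : Matrix n n ℂ → ℝ, Continuous G ∧ (∀ ρ, IsDensityMatrix ρ → G ρ ≤ -vnEntropy ρ) ∧
      -vnEntropy σ - ε ≤ G σ := by
  set V : Matrix n n ℂ := ↑hσ.isHermitian.eigenvectorUnitary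
  have hV := hσ.isHermitian.eigenvectorUnitary.2
  obtain ⟨g, hg, hgpos, hσg⟩ :=
    exists_pos_mem_stdSimplex_sub_le_sum_mul_log hσ.eigenvalues_mem_stdSimplex hε
  refine ⟨fun ρ => ∑ j, diagInBasis V ρ j * log (g j),
    continuous_finsetSum _ fun j _ => (continuous_diagInBasis V j).mul continuous_const,
    fun ρ hρ => ?_, ?_⟩
  · exact (sum_mul_log_le_sum_mul_log (hρ.diagInBasis_mem_stdSimplex hV) hg.1 hg.2.le
      fun j h => absurd h (hgpos j).ne').trans (hρ.sum_mul_log_diagInBasis_le_neg_vnEntropy hV)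
  · have hdiag : diagInBasis V σ = hσ.isHermitian.eigenvalues :=
      hσ.isHermitian.diagInBasis_eigenvectorUnitary
    beta_reduce
    rwa [hσ.isHermitian.vnEntropy_eq, neg_neg, hdiag]

theorem lowerSemicontinuousOn_neg_vnEntropy :
    LowerSemicontinuousOn (fun ρ : Matrix n n ℂ => -vnEntropy ρ) {ρ | IsDensityMatrix ρ} := by
  intro σ hσ y hy
  obtain ⟨G, hG, hGle, hGσ⟩ := IsDensityMatrix.exists_continuous_le_neg_vnEntropy hσ
    (half_pos (sub_pos.2 hy))
  have hyG : y < G σ := by simp only at hy hGσ; linarith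
  filter_upwards [tendsto_const_nhds.eventually_lt hG.continuousWithinAt hyG,
    self_mem_nhdsWithin] with ρ hρ hρD using hρ.trans_le (hGle ρ hρD)

end Entropy

section FreeEnergy

variable {n : Type*} [Fintype n] [DecidableEq n]

noncomputable def freeEnergy (H : Matrix n n ℂ) (T : ℝ) (ρ : Matrix n n ℂ) : ℝ :=
  (H * ρ).trace.re - T * vnEntropy ρ

theorem IsDensityMatrix.neg_mul_log_trace_exp_le_freeEnergy {A ρ : Matrix n n ℂ}
    (hρ : IsDensityMatrix ρ) (hA : A.IsHermitian) {T : ℝ} (hT : 0 < T) :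
    -(T * log (NormedSpace.exp ((-(T⁻¹) : ℂ) • A)).trace.re) ≤ freeEnergy A T ρ := by
  have hw := hρ.diagInBasis_mem_stdSimplex hA.eigenvectorUnitary.2
  have hvar := neg_mul_log_sum_exp_le hw hT hA.eigenvalues
  have hklein := hρ.sum_mul_log_diagInBasis_le_neg_vnEntropy hA.eigenvectorUnitary.2
  rw [hA.re_trace_exp_neg_inv_smul, freeEnergy, hA.re_trace_mul]
  nlinarith [mul_le_mul_of_nonneg_left hklein hT.le]

theorem Matrix.IsHermitian.exists_isDensityMatrix_freeEnergy_eq [Nonempty n] {A : Matrix n n ℂ}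
    (hA : A.IsHermitian) {T : ℝ} (hT : T ≠ 0) :
    ∃ τ, IsDensityMatrix τ ∧
      freeEnergy A T τ = -(T * log (NormedSpace.exp ((-(T⁻¹) : ℂ) • A)).trace.re) := by
  have hU := hA.eigenvectorUnitary.2
  have hg := gibbsDistribution_mem_stdSimplex T hA.eigenvalues
  refine ⟨_, isDensityMatrix_mul_diagonal_mul_star hU hg, ?_⟩
  rw [freeEnergy, hA.re_trace_mul, diagInBasis_mul_diagonal_mul_star_self hU,
    vnEntropy_mul_diagonal_mul_star hU hg, hA.re_trace_exp_neg_inv_smul,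
    ← sum_mul_gibbsDistribution_add_mul_sum_mul_log hT]
  ring

theorem convexOn_freeEnergy (H : Matrix n n ℂ) {T : ℝ} (hT : 0 ≤ T) :
    ConvexOn ℝ {ρ : Matrix n n ℂ | IsDensityMatrix ρ} (freeEnergy H T) := by
  refine ⟨convex_setOf_isDensityMatrix, fun ρ₁ h₁ ρ₂ h₂ a b ha hb hab => ?_⟩
  have hS := concaveOn_vnEntropy.2 h₁ h₂ ha hb hab
  simp only [freeEnergy, smul_eq_mul, Matrix.mul_add, Matrix.mul_smul, trace_add, trace_smul,
    Complex.add_re, Complex.real_smul, Complex.re_ofReal_mul] at hS ⊢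
  nlinarith [mul_le_mul_of_nonneg_left hS hT]

theorem lowerSemicontinuousOn_freeEnergy (H : Matrix n n ℂ) {T : ℝ} (hT : 0 ≤ T) :
    LowerSemicontinuousOn (freeEnergy H T) {ρ | IsDensityMatrix ρ} := by
  have hTS := (continuous_const_mul T).comp_lowerSemicontinuousOn
    (lowerSemicontinuousOn_neg_vnEntropy (n := n)) (monotone_mul_left_of_nonneg hT)
  have hE : Continuous fun ρ : Matrix n n ℂ => (H * ρ).trace.re := by fun_prop
  have hF : freeEnergy H T
      = fun ρ => (H * ρ).trace.re + ((T * ·) ∘ fun ρ => -vnEntropy ρ) ρ := by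
    ext ρ
    simp [freeEnergy, sub_eq_add_neg]
  rw [hF]
  exact hE.continuousOn.lowerSemicontinuousOn.add hTS

end FreeEnergy

section Epigraph

variable {n ι : Type*} [Fintype n] [DecidableEq n]

def freeEnergyEpigraph (H : Matrix n n ℂ) (Q : ι → Matrix n n ℂ) (T : ℝ) : Set ((ι → ℝ) × ℝ) :=
  {P | ∃ ρ, IsDensityMatrix ρ ∧ (fun i => (Q i * ρ).trace.re) = P.1 ∧ freeEnergy H T ρ ≤ P.2}

theorem convex_freeEnergyEpigraph (H : Matrix n n ℂ) (Q : ι → Matrix n n ℂ) {T : ℝ}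
    (hT : 0 ≤ T) : Convex ℝ (freeEnergyEpigraph H Q T) := by
  rintro ⟨x₁, s₁⟩ ⟨ρ₁, h₁, rfl, hs₁⟩ ⟨x₂, s₂⟩ ⟨ρ₂, h₂, rfl, hs₂⟩ a b ha hb hab
  refine ⟨a • ρ₁ + b • ρ₂, convex_setOf_isDensityMatrix h₁ h₂ ha hb hab, ?_, ?_⟩
  · ext i
    simp [Matrix.mul_add, trace_add, trace_smul]
  · calc freeEnergy H T (a • ρ₁ + b • ρ₂) ≤ a • freeEnergy H T ρ₁ + b • freeEnergy H T ρ₂ :=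
          (convexOn_freeEnergy H hT).2 h₁ h₂ ha hb hab
      _ ≤ a * s₁ + b * s₂ := by
          simp only [smul_eq_mul]
          gcongr

theorem isClosed_freeEnergyEpigraph (H : Matrix n n ℂ) (Q : ι → Matrix n n ℂ) {T : ℝ}
    (hT : 0 ≤ T) : IsClosed (freeEnergyEpigraph H Q T) := by
  set D := {ρ : Matrix n n ℂ | IsDensityMatrix ρ}
  have : CompactSpace D := isCompact_iff_compactSpace.mp isCompact_setOf_isDensityMatrix
  have hF : IsClosed {x : D × ℝ | freeEnergy H T x.1 ≤ x.2} :=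
    lowerSemicontinuous_iff_isClosed_epigraph.1
      (lowerSemicontinuous_restrict_iff.2 (lowerSemicontinuousOn_freeEnergy H hT))
  have hE : IsClosed {x : D × ((ι → ℝ) × ℝ) |
      (fun i => (Q i * x.1).trace.re) = x.2.1 ∧ freeEnergy H T x.1 ≤ x.2.2} :=
    (isClosed_eq (by fun_prop) (by fun_prop)).inter
      (hF.preimage (continuous_fst.prodMk (continuous_snd.comp continuous_snd)))
  convert isClosedMap_snd_of_compactSpace _ hE
  ext P
  constructor
  · rintro ⟨ρ, hρ, hP⟩
    exact ⟨(⟨ρ, hρ⟩, P), hP, rfl⟩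
  · rintro ⟨⟨ρ, P'⟩, hP', rfl⟩
    exact ⟨ρ, ρ.2, hP'⟩

end Epigraph

theorem exists_lt_sub_sum_mul_of_notMem {ι : Type*} [Fintype ι] [DecidableEq ι]
    {K : Set ((ι → ℝ) × ℝ)} (hconv : Convex ℝ K) (hclosed : IsClosed K) {q : ι → ℝ} {s y : ℝ}
    (hs : (q, s) ∈ K) (hys : y < s) (hy : (q, y) ∉ K) :
    ∃ ν : ι → ℝ, ∀ P ∈ K, y < P.2 - ∑ i, ν i * (P.1 i - q i) := by
  obtain ⟨f, u, hfy, hfK⟩ := geometric_hahn_banach_point_closed hconv hclosed hy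
  set c := f (0, 1)
  set ℓ : (ι → ℝ) →ₗ[ℝ] ℝ := (f : (ι → ℝ) × ℝ →L[ℝ] ℝ).toLinearMap.comp (LinearMap.inl ℝ _ ℝ)
  have hf : ∀ v t, f (v, t) = ℓ v + t * c := fun v t => by
    have : ((v, t) : (ι → ℝ) × ℝ) = (v, 0) + t • (0, 1) := by simp
    rw [this, map_add, map_smul, smul_eq_mul]
    rfl
  have hc : 0 < c := by
    have := hfK _ hs
    rw [hf] at this hfy
    nlinarith
  set ν : ι → ℝ := fun i => -ℓ (fun j => if i = j then 1 else 0) / c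
  have hν : ∀ x, ∑ i, ν i * x i = -ℓ x / c := fun x => by
    rw [LinearMap.pi_apply_eq_sum_univ ℓ, ← Finset.sum_neg_distrib, Finset.sum_div]
    refine Finset.sum_congr rfl fun i _ => ?_
    simp only [ν, smul_eq_mul]
    ring
  refine ⟨ν, fun P hP => ?_⟩
  have := hfK P hP
  rw [hf] at this hfy
  have hsub := hν (P.1 - q)
  simp only [Pi.sub_apply] at hsub
  rw [hsub, map_sub, neg_div, sub_neg_eq_add, ← sub_lt_iff_lt_add', lt_div_iff₀ hc]
  linarith

section Duality

variable {d c : ℕ} {H : Matrix (Fin d) (Fin d) ℂ} {Q : Fin c → Matrix (Fin d) (Fin d) ℂ}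

theorem isHermitian_sub_muDotQ (hH : H.IsHermitian) (hQ : ∀ i, (Q i).IsHermitian)
    (μ : Fin c → ℝ) : (H - muDotQ Q μ).IsHermitian :=
  hH.sub (isSelfAdjoint_sum _ fun i _ => ((hQ i).smul (Complex.conj_ofReal (μ i))).isSelfAdjoint)

theorem freeEnergy_sub_muDotQ (T : ℝ) (μ : Fin c → ℝ) (ρ : Matrix (Fin d) (Fin d) ℂ) :
    freeEnergy (H - muDotQ Q μ) T ρ = freeEnergy H T ρ - ∑ i, μ i * (Q i * ρ).trace.re := by
  simp only [freeEnergy, muDotQ, Matrix.sub_mul, Finset.sum_mul, trace_sub, trace_sum,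
    Matrix.smul_mul, trace_smul, smul_eq_mul, Complex.sub_re, Complex.re_sum, Complex.re_ofReal_mul]
  ring

theorem dual_le_freeEnergy (hH : H.IsHermitian) (hQ : ∀ i, (Q i).IsHermitian) {q : Fin c → ℝ}
    {T : ℝ} (hT : 0 < T) {ρ : Matrix (Fin d) (Fin d) ℂ} (hρ : IsDensityMatrix ρ)
    (hρq : ∀ i, (Q i * ρ).trace = (q i : ℂ)) (μ : Fin c → ℝ) :
    ∑ i, μ i * q i - T * log (partitionZ H Q T μ) ≤ freeEnergy H T ρ := by
  have := hρ.neg_mul_log_trace_exp_le_freeEnergy (isHermitian_sub_muDotQ hH hQ μ) hT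
  simp only [freeEnergy_sub_muDotQ, hρq, Complex.ofReal_re] at this
  rw [partitionZ]
  linarith

theorem exists_lt_dual (hH : H.IsHermitian) (hQ : ∀ i, (Q i).IsHermitian) {q : Fin c → ℝ}
    {T : ℝ} (hT : 0 < T) (hfeas : ∃ ρ, IsDensityMatrix ρ ∧ ∀ i, (Q i * ρ).trace = (q i : ℂ))
    {y : ℝ}
    (hy : ∀ ρ, IsDensityMatrix ρ → (∀ i, (Q i * ρ).trace = (q i : ℂ)) → y < freeEnergy H T ρ) :
    ∃ ν, y < ∑ i, ν i * q i - T * log (partitionZ H Q T ν) := by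
  obtain ⟨ρ₀, hρ₀, hρ₀q⟩ := hfeas
  have := hρ₀.nonempty
  have hq : (fun i => (Q i * ρ₀).trace.re) = q := by ext i; simp [hρ₀q]
  have hqy : (q, y) ∉ freeEnergyEpigraph H Q T := by
    rintro ⟨ρ, hρ, hρq, hle⟩
    refine (hy ρ hρ fun i => ?_).not_ge hle
    rw [← (hQ i).ofReal_re_trace_mul hρ.isHermitian, congrFun hρq i]
  obtain ⟨ν, hν⟩ := exists_lt_sub_sum_mul_of_notMem (convex_freeEnergyEpigraph H Q hT.le)
    (isClosed_freeEnergyEpigraph H Q hT.le) ⟨ρ₀, hρ₀, hq, le_rfl⟩ (hy ρ₀ hρ₀ hρ₀q) hqy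
  obtain ⟨τ, hτ, hτF⟩ :=
    (isHermitian_sub_muDotQ hH hQ ν).exists_isDensityMatrix_freeEnergy_eq hT.ne'
  have := hν (fun i => (Q i * τ).trace.re, freeEnergy H T τ) ⟨τ, hτ, rfl, le_rfl⟩
  rw [freeEnergy_sub_muDotQ] at hτF
  simp only [mul_sub, Finset.sum_sub_distrib] at this
  refine ⟨ν, ?_⟩
  rw [partitionZ]
  linarith

end Duality

theorem stmt_1_general (d c : ℕ)
    (H : Matrix (Fin d) (Fin d) ℂ) (hH : H.IsHermitian)
    (Q : Fin c → Matrix (Fin d) (Fin d) ℂ) (hQ : ∀ i, (Q i).IsHermitian)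
    (q : Fin c → ℝ) (T : ℝ) (hT : 0 < T)
    (hfeas : ∃ ρ : Matrix (Fin d) (Fin d) ℂ, IsDensityMatrix ρ ∧
      ∀ i, Matrix.trace (Q i * ρ) = (q i : ℂ)) :
    sInf {x : ℝ | ∃ ρ : Matrix (Fin d) (Fin d) ℂ, IsDensityMatrix ρ ∧
        (∀ i, Matrix.trace (Q i * ρ) = (q i : ℂ)) ∧
        x = (Matrix.trace (H * ρ)).re - T * vnEntropy ρ}
      = ⨆ μ : Fin c → ℝ, (∑ i, μ i * q i - T * Real.log (partitionZ H Q T μ)) := by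
  set S := {x : ℝ | ∃ ρ : Matrix (Fin d) (Fin d) ℂ, IsDensityMatrix ρ ∧
    (∀ i, Matrix.trace (Q i * ρ) = (q i : ℂ)) ∧ x = (Matrix.trace (H * ρ)).re - T * vnEntropy ρ}
  have weak : ∀ μ, ∀ x ∈ S, ∑ i, μ i * q i - T * log (partitionZ H Q T μ) ≤ x := by
    rintro μ _ ⟨ρ, hρ, hρq, rfl⟩
    exact dual_le_freeEnergy hH hQ hT hρ hρq μ
  obtain ⟨ρ₀, hρ₀, hρ₀q⟩ := hfeas
  have hS : S.Nonempty := ⟨_, ρ₀, hρ₀, hρ₀q, rfl⟩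
  refine le_antisymm (le_of_forall_pos_le_add fun ε hε => ?_)
    (ciSup_le fun μ => le_csInf hS (weak μ))
  obtain ⟨ν, hν⟩ := exists_lt_dual hH hQ hT ⟨ρ₀, hρ₀, hρ₀q⟩ (y := sInf S - ε)
    fun ρ hρ hρq => (sub_lt_self _ hε).trans_le (csInf_le ⟨_, weak 0⟩ ⟨ρ, hρ, hρq, rfl⟩)
  have := le_ciSup ⟨_, Set.forall_mem_range.2 fun μ => weak μ _ hS.some_mem⟩ ν
  linarith

/-- For every `T > 0` and feasible `q`,
`F_T(Q,q) = sup_{μ ∈ ℝ^c} (μ·q − T ln Z_T(μ))`. -/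
theorem stmt_1 (d c : ℕ) (hd : 1 ≤ d)
    (H : Matrix (Fin d) (Fin d) ℂ) (hH : H.IsHermitian)
    (Q : Fin c → Matrix (Fin d) (Fin d) ℂ) (hQ : ∀ i, (Q i).IsHermitian)
    (q : Fin c → ℝ) (T : ℝ) (hT : 0 < T)
    (hfeas : ∃ ρ : Matrix (Fin d) (Fin d) ℂ, IsDensityMatrix ρ ∧
      ∀ i, Matrix.trace (Q i * ρ) = (q i : ℂ)) :
    sInf {x : ℝ | ∃ ρ : Matrix (Fin d) (Fin d) ℂ, IsDensityMatrix ρ ∧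
        (∀ i, Matrix.trace (Q i * ρ) = (q i : ℂ)) ∧
        x = (Matrix.trace (H * ρ)).re - T * vnEntropy ρ}
      = ⨆ μ : Fin c → ℝ, (∑ i, μ i * q i - T * Real.log (partitionZ H Q T μ)) :=
  stmt_1_general d c H hH Q hQ q T hT hfeas
end

section
/- Let f(μ) := μ·q − T ln Z_T(μ) for T > 0 and q ∈ ℝ^c. Then for every i ∈ [c] and every μ ∈ ℝ^c, the partial derivative of f with respect to μ_i exists and equals ∂f/∂μ_i (μ) = q_i − Tr[Q_i ρ_T(μ)]. -/
open Matrix MeasureTheory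
open scoped ComplexOrder

/-!
Along the line `t ↦ update μ i t`, the exponent `X(t) = -(H - μ·Q)/T` is affine with
`X' = Q_i/T`, which need not commute with `X`. Cyclicity of the trace still gives
`d/dt Tr[X^n] = n Tr[X' X^(n-1)]`, so differentiating the exponential series termwise yields
`d/dt Tr[e^X] = Tr[X' e^X]`; the derivative of `-T ln Z` is then `-Tr[Q_i e^X] / Z`.
-/

open NormedSpace
open scoped Nat

theorem inv_factorial_succ_mul_succ {K : Type*} [Field K] [CharZero K] (n : ℕ) :
    (((n + 1)! : K))⁻¹ * ((n : K) + 1) = ((n ! : K))⁻¹ := by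
  rw [Nat.factorial_succ, Nat.cast_mul, Nat.cast_succ, mul_inv, mul_comm, ← mul_assoc,
    mul_inv_cancel₀ (Nat.cast_add_one_ne_zero n), one_mul]

section TraceExp

variable {𝕜 𝔸 F : Type*} [RCLike 𝕜] [NormedRing 𝔸] [NormedAlgebra 𝕜 𝔸]
  [NormedAddCommGroup F] [NormedSpace 𝕜 F] (τ : 𝔸 →L[𝕜] F)

noncomputable def ContinuousLinearMap.compMulRightL : 𝔸 →L[𝕜] 𝔸 →L[𝕜] F :=
  (ContinuousLinearMap.compL 𝕜 𝔸 𝔸 F τ).comp (ContinuousLinearMap.mul 𝕜 𝔸).flip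

@[simp]
theorem ContinuousLinearMap.compMulRightL_apply_apply (a h : 𝔸) :
    τ.compMulRightL a h = τ (h * a) := rfl

theorem ContinuousLinearMap.norm_compMulRightL_apply_le (a : 𝔸) :
    ‖τ.compMulRightL a‖ ≤ ‖τ‖ * ‖a‖ :=
  ContinuousLinearMap.opNorm_le_bound _ (by positivity) fun h =>
    calc ‖τ (h * a)‖ ≤ ‖τ‖ * ‖h * a‖ := τ.le_opNorm _
      _ ≤ ‖τ‖ * ‖a‖ * ‖h‖ := by
        rw [mul_assoc, mul_comm ‖a‖]; gcongr; exact norm_mul_le _ _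

theorem ContinuousLinearMap.norm_compMulRightL_pow_le (y : 𝔸) (m : ℕ) :
    ‖τ.compMulRightL (y ^ m)‖ ≤ ‖τ‖ * ‖y‖ ^ m := by
  cases m with
  | zero =>
    simpa using (τ.compMulRightL 1).opNorm_le_bound (norm_nonneg τ) fun h => by
      simpa using τ.le_opNorm h
  | succ m =>
    refine (τ.norm_compMulRightL_apply_le _).trans ?_
    gcongr
    exact norm_pow_le' y m.succ_pos

variable {τ}

theorem hasFDerivAt_trace_pow (hτ : ∀ a b, τ (a * b) = τ (b * a)) (n : ℕ) (x : 𝔸) :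
    HasFDerivAt (fun y => τ (y ^ n)) ((n : 𝕜) • τ.compMulRightL (x ^ (n - 1))) x := by
  refine (τ.hasFDerivAt.comp x (hasFDerivAt_pow' n)).congr_fderiv ?_
  ext h
  have cyclic : ∀ i ∈ Finset.range n, τ (x ^ (n - 1 - i) * h * x ^ i) = τ (h * x ^ (n - 1)) := by
    intro i hi
    rw [mul_assoc, hτ, mul_assoc, ← pow_add,
      Nat.add_sub_of_le (Nat.le_sub_one_of_lt (Finset.mem_range.mp hi))]
  simp [Finset.sum_congr rfl cyclic, Nat.cast_smul_eq_nsmul]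

theorem hasFDerivAt_trace_exp [CompleteSpace 𝔸] [CompleteSpace F]
    (hτ : ∀ a b, τ (a * b) = τ (b * a)) (x : 𝔸) :
    HasFDerivAt (fun y => τ (exp y)) (τ.compMulRightL (exp x)) x := by
  set r := ‖x‖ + 1
  have norm_le : ∀ y ∈ Metric.ball x 1, ‖y‖ ≤ r := fun y hy => by
    have := norm_le_norm_add_norm_sub' y x
    rw [Metric.mem_ball, dist_eq_norm] at hy
    linarith
  have hasSum_exp : ∀ y : 𝔸, HasSum (fun n => (n !⁻¹ : 𝕜) • τ (y ^ n)) (τ (exp y)) := fun y => by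
    simpa using (exp_series_hasSum_exp' (𝕂 := 𝕜) y).mapL τ
  have hasSum_deriv : HasSum (fun n => (n !⁻¹ : 𝕜) • (n : 𝕜) • τ.compMulRightL (x ^ (n - 1)))
      (τ.compMulRightL (exp x)) := by
    rw [← hasSum_nat_add_iff' 1]
    simpa [smul_smul, inv_factorial_succ_mul_succ] using
      (exp_series_hasSum_exp' (𝕂 := 𝕜) x).mapL τ.compMulRightL
  have deriv_le : ∀ n, ∀ y ∈ Metric.ball x 1,
      ‖(n !⁻¹ : 𝕜) • (n : 𝕜) • τ.compMulRightL (y ^ (n - 1))‖ ≤ ‖τ‖ * (r ^ (n - 1) / (n - 1)!) := by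
    rintro (_ | n) y hy
    · simp
    · rw [smul_smul, Nat.cast_succ, inv_factorial_succ_mul_succ, norm_smul, norm_inv,
        RCLike.norm_natCast, inv_mul_eq_div, Nat.add_sub_cancel, mul_div_assoc']
      gcongr
      refine (τ.norm_compMulRightL_pow_le _ _).trans ?_
      gcongr
      exact norm_le y hy
  have summable_bound : Summable fun n => ‖τ‖ * (r ^ (n - 1) / (n - 1)!) := by
    refine Summable.mul_left _ ((summable_nat_add_iff 1).mp ?_)
    simpa using Real.summable_pow_div_factorial r
  -- `convex_ball` needs a real normed space structure
  let _ : NormedSpace ℝ 𝔸 := NormedSpace.restrictScalars ℝ 𝕜 𝔸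
  have := hasFDerivAt_tsum_of_isPreconnected summable_bound Metric.isOpen_ball
    (convex_ball x 1).isPreconnected
    (fun n y _ => (hasFDerivAt_trace_pow hτ n y).const_smul (n !⁻¹ : 𝕜)) deriv_le
    (Metric.mem_ball_self one_pos) (hasSum_exp x).summable (Metric.mem_ball_self one_pos)
  simpa only [Pi.smul_apply, fun y => (hasSum_exp y).tsum_eq, hasSum_deriv.tsum_eq] using this

end TraceExp

theorem hasDerivAt_sum_update_smul {ι M : Type*} [Fintype ι] [DecidableEq ι]
    [NormedAddCommGroup M] [NormedSpace ℝ M] (v : ι → M) (μ : ι → ℝ) (i : ι) (t : ℝ) :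
    HasDerivAt (fun s => ∑ k, Function.update μ i s k • v k) (v i) t := by
  have := HasDerivAt.fun_sum (u := Finset.univ) fun k _ =>
    (hasDerivAt_pi.1 (hasDerivAt_update μ i t) k).smul_const (v k)
  simpa [Pi.single_apply] using this

section Matrix
variable {n : Type*} [Fintype n] [DecidableEq n]

theorem Matrix.hasDerivAt_trace_exp {γ : ℝ → Matrix n n ℂ} {γ' : Matrix n n ℂ} {t : ℝ}
    (hγ : HasDerivAt γ γ' t) :
    HasDerivAt (fun s => (exp (γ s)).trace) ((γ' * exp (γ t)).trace) t := by
  -- Matrices carry no global norm; any of the equivalent ones induces the product topology.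
  let τ : Matrix n n ℂ →L[ℝ] ℂ := ⟨Matrix.traceLinearMap n ℝ ℂ, continuous_id.matrix_trace⟩
  let _ := Matrix.linftyOpNormedRing (n := n) (α := ℂ)
  let _ := Matrix.linftyOpNormedAlgebra (n := n) (α := ℂ) (R := ℝ)
  have hτ : ∀ a b : Matrix n n ℂ, τ (a * b) = τ (b * a) := Matrix.trace_mul_comm
  exact (hasFDerivAt_trace_exp hτ (γ t)).comp_hasDerivAt t hγ

theorem Matrix.IsHermitian.posDef_exp {A : Matrix n n ℂ} (hA : A.IsHermitian) :
    (NormedSpace.exp A).PosDef := by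
  set B := NormedSpace.exp ((2⁻¹ : ℝ) • A)
  have hB : B.IsHermitian := (hA.smul (IsSelfAdjoint.all _)).exp
  have : NormedSpace.exp A = Bᴴ * B := by
    rw [hB.eq, ← pow_two, ← Matrix.exp_nsmul, ← smul_assoc, nsmul_eq_mul]
    norm_num
  rw [this]
  exact .conjTranspose_mul_self B (Matrix.mulVec_injective_iff_isUnit.2 (Matrix.isUnit_exp _))

end Matrix

section Thermal
variable {d c : ℕ} {H : Matrix (Fin d) (Fin d) ℂ} {Q : Fin c → Matrix (Fin d) (Fin d) ℂ}

theorem muDotQ_eq_sum_smul (μ : Fin c → ℝ) :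
    muDotQ Q μ = ∑ k, μ k • Q k := by
  simp only [muDotQ, Complex.coe_smul]

variable (H Q) in
theorem hasDerivAt_exponent_update (T : ℝ) (μ : Fin c → ℝ) (i : Fin c) (t : ℝ) :
    HasDerivAt (fun s => (-(T⁻¹) : ℂ) • (H - muDotQ Q (Function.update μ i s)))
      (T⁻¹ • Q i) t := by
  let _ := Matrix.normedAddCommGroup (m := Fin d) (n := Fin d) (α := ℂ)
  let _ := Matrix.normedSpace (m := Fin d) (n := Fin d) (α := ℂ) (R := ℝ)
  let _ := Matrix.normedSpace (m := Fin d) (n := Fin d) (α := ℂ) (R := ℂ)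
  have := ((hasDerivAt_sum_update_smul Q μ i t).const_sub H).const_smul (-(T⁻¹) : ℂ)
  simp only [muDotQ_eq_sum_smul]
  rw [neg_smul_neg] at this
  exact this

theorem isHermitian_muDotQ (hQ : ∀ i, (Q i).IsHermitian) (μ : Fin c → ℝ) :
    (muDotQ Q μ).IsHermitian := by
  rw [muDotQ_eq_sum_smul]
  exact isSelfAdjoint_sum _ fun k _ => (hQ k).smul (IsSelfAdjoint.all _)

theorem partitionZ_pos [Nonempty (Fin d)] (hH : H.IsHermitian) (hQ : ∀ i, (Q i).IsHermitian)
    (T : ℝ) (μ : Fin c → ℝ) : 0 < partitionZ H Q T μ := by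
  have hX : ((-(T⁻¹) : ℂ) • (H - muDotQ Q μ)).IsHermitian :=
    (hH.sub (isHermitian_muDotQ hQ μ)).smul (by simp [isSelfAdjoint_iff])
  exact (Complex.pos_iff.1 hX.posDef_exp.trace_pos).1

theorem re_trace_mul_thermalState (A : Matrix (Fin d) (Fin d) ℂ) (T : ℝ) (μ : Fin c → ℝ) :
    (A * thermalState H Q T μ).trace.re
      = (A * exp ((-(T⁻¹) : ℂ) • (H - muDotQ Q μ))).trace.re / partitionZ H Q T μ := by
  simp [thermalState, Matrix.trace_smul, ← Complex.ofReal_inv, div_eq_inv_mul]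

theorem hasDerivAt_partitionZ_update (T : ℝ) (μ : Fin c → ℝ) (i : Fin c) :
    HasDerivAt (fun t => partitionZ H Q T (Function.update μ i t))
      (T⁻¹ * (Q i * exp ((-(T⁻¹) : ℂ) • (H - muDotQ Q μ))).trace.re) (μ i) := by
  have := Complex.reCLM.hasFDerivAt.comp_hasDerivAt (μ i)
    (Matrix.hasDerivAt_trace_exp (hasDerivAt_exponent_update H Q T μ i (μ i)))
  simpa [Function.comp_def, partitionZ, Matrix.trace_smul, ← Complex.ofReal_inv] using this

theorem hasDerivAt_log_partitionZ_update [Nonempty (Fin d)] (hH : H.IsHermitian)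
    (hQ : ∀ i, (Q i).IsHermitian) (T : ℝ) (μ : Fin c → ℝ) (i : Fin c) :
    HasDerivAt (fun t => Real.log (partitionZ H Q T (Function.update μ i t)))
      (T⁻¹ * (Q i * thermalState H Q T μ).trace.re) (μ i) := by
  have := (hasDerivAt_partitionZ_update T μ i).log
    (by simpa using (partitionZ_pos hH hQ T μ).ne')
  rw [Function.update_eq_self] at this
  convert this using 1
  rw [re_trace_mul_thermalState]
  ring

end Thermal

/-- the partial derivative of `f(μ) = μ·q − T ln Z_T(μ)` with
respect to `μ_i` exists and equals `q_i − Tr[Q_i ρ_T(μ)]`. -/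
theorem stmt_5 (d c : ℕ) (hd : 1 ≤ d)
    (H : Matrix (Fin d) (Fin d) ℂ) (hH : H.IsHermitian)
    (Q : Fin c → Matrix (Fin d) (Fin d) ℂ) (hQ : ∀ i, (Q i).IsHermitian)
    (q : Fin c → ℝ) (T : ℝ) (hT : 0 < T) (μ : Fin c → ℝ) (i : Fin c) :
    HasDerivAt
      (fun t : ℝ => ∑ k, Function.update μ i t k * q k
        - T * Real.log (partitionZ H Q T (Function.update μ i t)))
      (q i - (Matrix.trace (Q i * thermalState H Q T μ)).re)
      (μ i) := by
  have : Nonempty (Fin d) := Fin.pos_iff_nonempty.mp hd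
  have hlin : HasDerivAt (fun t : ℝ => ∑ k, Function.update μ i t k * q k) (q i) (μ i) := by
    simpa using hasDerivAt_sum_update_smul q μ i (μ i)
  refine (hlin.sub ((hasDerivAt_log_partitionZ_update hH hQ T μ i).const_mul T)).congr_deriv ?_
  rw [mul_inv_cancel_left₀ hT.ne']
end

section
/- For every T > 0, every μ ∈ ℝ^c, and every i ∈ [c], the partial derivative of the partition function satisfies ∂Z_T(μ)/∂μ_i = (1/T)·Tr[Q_i exp(−(H − μ·Q)/T)]. -/
open Matrix MeasureTheory
open scoped ComplexOrder

/-!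
Expanding `exp` into its power series, cyclicity of the trace turns the derivative of
`X ↦ Tr (X ^ n)` into `h ↦ n Tr (X ^ (n - 1) h)`. These derivatives are summable uniformly on
balls, so the series may be differentiated term by term, giving `h ↦ Tr (exp X · h)` as the
derivative of `Tr ∘ exp`. The partition function restricted to the `i`-th chemical potential is
`Tr ∘ exp` along an affine path with velocity `Q i / T`.
-/

open ContinuousLinearMap NormedSpace
open scoped Nat

section TracialExp

variable {𝕜 𝔸 E : Type*} [RCLike 𝕜] [NormedRing 𝔸] [NormedAlgebra 𝕜 𝔸]
  [NormedAddCommGroup E] [NormedSpace 𝕜 E]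

theorem opNorm_comp_mul_pow_le (τ : 𝔸 →L[𝕜] E) (y : 𝔸) (m : ℕ) :
    ‖τ ∘L mul 𝕜 𝔸 (y ^ m)‖ ≤ ‖τ‖ * ‖y‖ ^ m := by
  rcases m.eq_zero_or_pos with rfl | hm
  · have : τ ∘L mul 𝕜 𝔸 1 = τ := by ext; simp
    simp [this]
  · calc ‖τ ∘L mul 𝕜 𝔸 (y ^ m)‖ ≤ ‖τ‖ * ‖y ^ m‖ :=
          (opNorm_comp_le _ _).trans (by gcongr; exact opNorm_mul_apply_le _ _ _)
      _ ≤ ‖τ‖ * ‖y‖ ^ m := by gcongr; exact norm_pow_le' y hm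

theorem hasFDerivAt_tracial_comp_pow (τ : 𝔸 →L[𝕜] E) (hτ : ∀ a b, τ (a * b) = τ (b * a))
    (n : ℕ) (x : 𝔸) :
    HasFDerivAt (fun y => τ (y ^ n)) ((n : 𝕜) • τ ∘L mul 𝕜 𝔸 (x ^ (n - 1))) x := by
  refine (τ.hasFDerivAt.comp x (hasFDerivAt_pow' n)).congr_fderiv ?_
  ext h
  simp only [ContinuousLinearMap.comp_apply, _root_.sum_apply, map_sum]
  have hterm : ∀ i ∈ Finset.range n,
      τ ((MulOpposite.op (x ^ i) • x ^ (n.pred - i) • ContinuousLinearMap.id 𝕜 𝔸) h)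
        = τ (x ^ (n - 1) * h) := by
    intro i hi
    simp only [_root_.smul_apply, id_apply, MulOpposite.smul_eq_mul_unop, MulOpposite.unop_op,
      smul_eq_mul]
    rw [hτ, ← mul_assoc, ← pow_add, Nat.pred_eq_sub_one,
      Nat.add_sub_of_le (Nat.le_sub_one_of_lt (Finset.mem_range.mp hi))]
  rw [Finset.sum_congr rfl hterm, Finset.sum_const, Finset.card_range, _root_.smul_apply,
    Nat.cast_smul_eq_nsmul, ContinuousLinearMap.comp_apply, mul_apply']

theorem summable_mul_pow_pred_div_factorial (r : ℝ) :
    Summable fun n : ℕ => (n : ℝ) * r ^ (n - 1) / n ! := by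
  rw [← summable_nat_add_iff 1]
  refine (Real.summable_pow_div_factorial r).congr fun n => ?_
  rw [Nat.add_sub_cancel, Nat.factorial_succ, Nat.cast_mul]
  field_simp

variable [CompleteSpace 𝔸] [CompleteSpace E]

theorem hasFDerivAt_tracial_comp_exp (τ : 𝔸 →L[𝕜] E) (hτ : ∀ a b, τ (a * b) = τ (b * a))
    (x : 𝔸) :
    HasFDerivAt (fun y => τ (exp y)) (τ ∘L mul 𝕜 𝔸 (exp x)) x := by
  set r := ‖x‖ + 1
  set f : ℕ → 𝔸 → E := fun n y => (n ! : 𝕜)⁻¹ • τ (y ^ n)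
  set f' : ℕ → 𝔸 → 𝔸 →L[𝕜] E := fun n y => (n ! : 𝕜)⁻¹ • (n : 𝕜) • τ ∘L mul 𝕜 𝔸 (y ^ (n - 1))
  have hx : x ∈ Metric.ball (0 : 𝔸) r := by simp [r]
  have hball : IsPreconnected (Metric.ball (0 : 𝔸) r) :=
    letI := NormedSpace.restrictScalars ℝ 𝕜 𝔸
    (convex_ball (0 : 𝔸) r).isPreconnected
  have hexp : ∀ y, HasSum (fun n => f n y) (τ (exp y)) := fun y => by
    simpa only [map_smul] using (exp_series_hasSum_exp' (𝕂 := 𝕜) y).mapL τ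
  have hf : ∀ n y, y ∈ Metric.ball (0 : 𝔸) r → HasFDerivAt (f n) (f' n y) y :=
    fun n y _ => (hasFDerivAt_tracial_comp_pow τ hτ n y).const_smul _
  have hf' : ∀ n y, y ∈ Metric.ball (0 : 𝔸) r →
      ‖f' n y‖ ≤ ‖τ‖ * ((n : ℝ) * r ^ (n - 1) / n !) := by
    intro n y hy
    have hy : ‖y‖ ≤ r := (mem_ball_zero_iff.mp hy).le
    calc ‖f' n y‖ = (n : ℝ) / n ! * ‖τ ∘L mul 𝕜 𝔸 (y ^ (n - 1))‖ := by
          simp only [f', norm_smul, norm_inv, RCLike.norm_natCast]; ring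
      _ ≤ (n : ℝ) / n ! * (‖τ‖ * ‖y‖ ^ (n - 1)) := by gcongr; exact opNorm_comp_mul_pow_le τ y _
      _ ≤ (n : ℝ) / n ! * (‖τ‖ * r ^ (n - 1)) := by gcongr
      _ = ‖τ‖ * ((n : ℝ) * r ^ (n - 1) / n !) := by ring
  have hsum : HasSum (fun n => f' n x) (τ ∘L mul 𝕜 𝔸 (exp x)) := by
    have hcoef : ∀ m : ℕ, ((m + 1)! : 𝕜)⁻¹ * ((m + 1 : ℕ) : 𝕜) = (m ! : 𝕜)⁻¹ := fun m => by
      rw [Nat.factorial_succ, Nat.cast_mul]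
      field_simp
    refine (hasSum_nat_add_iff' 1).mp ?_
    simp only [f', Finset.sum_range_one, Nat.cast_zero, Nat.add_sub_cancel, smul_smul, hcoef]
    simpa using (exp_series_hasSum_exp' (𝕂 := 𝕜) x).mapL ((compL 𝕜 𝔸 𝔸 E τ).comp (mul 𝕜 𝔸))
  have := hasFDerivAt_tsum_of_isPreconnected
    ((summable_mul_pow_pred_div_factorial r).mul_left ‖τ‖) Metric.isOpen_ball
    hball hf hf' hx (hexp x).summable hx
  rw [hsum.tsum_eq] at this
  simpa only [(hexp _).tsum_eq] using this

end TracialExp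

theorem Matrix.hasDerivAt_trace_exp_add_smul {n 𝕜 : Type*} [Fintype n] [DecidableEq n]
    [RCLike 𝕜] (C B : Matrix n n 𝕜) (t : ℝ) :
    HasDerivAt (fun s : ℝ => trace (exp (C + (s : 𝕜) • B)))
      (trace (B * exp (C + (t : 𝕜) • B))) t := by
  let : NormedRing (Matrix n n 𝕜) := Matrix.linftyOpNormedRing
  let : NormedAlgebra ℝ (Matrix n n 𝕜) := Matrix.linftyOpNormedAlgebra
  let τ : Matrix n n 𝕜 →L[ℝ] 𝕜 := (traceLinearMap n ℝ 𝕜).toContinuousLinearMap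
  have hpath : HasDerivAt (fun s : ℝ => C + (s : 𝕜) • B) B t := by
    have := ((hasDerivAt_id t).smul_const B).const_add C
    simp only [id, RCLike.real_smul_eq_coe_smul (K := 𝕜), RCLike.ofReal_one, one_smul] at this
    exact this
  exact ((hasFDerivAt_tracial_comp_exp τ trace_mul_comm _).comp_hasDerivAt t hpath).congr_deriv
    (trace_mul_comm _ _)

theorem muDotQ_update {d c : ℕ} (Q : Fin c → Matrix (Fin d) (Fin d) ℂ) (μ : Fin c → ℝ)
    (i : Fin c) (s : ℝ) :
    muDotQ Q (Function.update μ i s) = muDotQ Q (Function.update μ i 0) + (s : ℂ) • Q i := by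
  rw [← sub_eq_iff_eq_add', muDotQ, muDotQ, ← Finset.sum_sub_distrib]
  simp only [← sub_smul]
  rw [Finset.sum_eq_single i]
  · simp
  · intro j _ hj
    simp [hj]
  · simp

theorem stmt_6_general (d c : ℕ)
    (H : Matrix (Fin d) (Fin d) ℂ)
    (Q : Fin c → Matrix (Fin d) (Fin d) ℂ)
    (T : ℝ) (μ : Fin c → ℝ) (i : Fin c) :
    HasDerivAt
      (fun t : ℝ => partitionZ H Q T (Function.update μ i t))
      (T⁻¹ * (Matrix.trace (Q i *
        NormedSpace.exp ((-(T⁻¹) : ℂ) • (H - muDotQ Q μ)))).re)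
      (μ i) := by
  set C := (-(T⁻¹) : ℂ) • (H - muDotQ Q (Function.update μ i 0))
  set B := ((T⁻¹ : ℝ) : ℂ) • Q i
  have hpath : ∀ t : ℝ,
      (-(T⁻¹) : ℂ) • (H - muDotQ Q (Function.update μ i t)) = C + (t : ℂ) • B := by
    intro t
    rw [muDotQ_update]
    push_cast
    module
  have hval : T⁻¹ * (trace (Q i * exp ((-(T⁻¹) : ℂ) • (H - muDotQ Q μ)))).re
      = (trace (B * exp (C + (μ i : ℂ) • B))).re := by
    rw [← hpath, Function.update_eq_self, smul_mul_assoc, trace_smul, smul_eq_mul,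
      Complex.re_ofReal_mul]
  simp only [partitionZ, hpath, hval]
  exact Complex.reCLM.hasFDerivAt.comp_hasDerivAt (μ i)
    (Matrix.hasDerivAt_trace_exp_add_smul C B (μ i))

/-- `∂Z_T(μ)/∂μ_i = (1/T)·Tr[Q_i exp(−(H − μ·Q)/T)]`. -/
theorem stmt_6 (d c : ℕ) (hd : 1 ≤ d)
    (H : Matrix (Fin d) (Fin d) ℂ) (hH : H.IsHermitian)
    (Q : Fin c → Matrix (Fin d) (Fin d) ℂ) (hQ : ∀ i, (Q i).IsHermitian)
    (T : ℝ) (hT : 0 < T) (μ : Fin c → ℝ) (i : Fin c) :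
    HasDerivAt
      (fun t : ℝ => partitionZ H Q T (Function.update μ i t))
      (T⁻¹ * (Matrix.trace (Q i *
        NormedSpace.exp ((-(T⁻¹) : ℂ) • (H - muDotQ Q μ)))).re)
      (μ i) :=
  stmt_6_general d c H Q T μ i
end
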